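/- Let L = F e₀ ⋉ V be an indecomposable almost Abelian Lie algebra, and suppose there exists a nonzero linear functional β on V with [L,L] ⊆ ker β and (β v)[e₀,v'] = (β v')[e₀,v] for all v, v' ∈ V. Then L is isomorphic to the Heisenberg algebra H_F. -/

import Mathlib

variable {F : Type*} [Field F] {V : Type*} [AddCommGroup V] [Module F V]

/-- The almost Abelian Lie algebra `F e₀ ⋉ V` determined by the operator `T = ad_{e₀}|_V`:
the underlying vector space is `F × V`, with bracket `[(t,v),(s,w)] = (0, t • T w - s • T v)`. -/
def AA (F V : Type*) [Field F] [AddCommGroup V] [Module F V] (_T : Module.End F V) : Type _ :=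
  F × V

namespace AA

variable {T : Module.End F V}

instance : AddCommGroup (AA F V T) := inferInstanceAs (AddCommGroup (F × V))
instance : Module F (AA F V T) := inferInstanceAs (Module F (F × V))

instance : LieRing (AA F V T) where
  bracket := fun (x y : F × V) => (((0 : F), x.1 • T y.2 - y.1 • T x.2) : F × V)
  add_lie := by
    rintro ⟨a, u⟩ ⟨b, v⟩ ⟨c, w⟩
    show (((0 : F), (a + b) • T w - c • T (u + v)) : F × V)
      = (((0 : F), a • T w - c • T u) : F × V) + (((0 : F), b • T w - c • T v) : F × V)
    ext
    · simp
    · show (a + b) • T w - c • T (u + v) = (a • T w - c • T u) + (b • T w - c • T v)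
      simp only [map_add, smul_add, add_smul]
      module
  lie_add := by
    rintro ⟨a, u⟩ ⟨b, v⟩ ⟨c, w⟩
    show (((0 : F), a • T (v + w) - (b + c) • T u) : F × V)
      = (((0 : F), a • T v - b • T u) : F × V) + (((0 : F), a • T w - c • T u) : F × V)
    ext
    · simp
    · show a • T (v + w) - (b + c) • T u = (a • T v - b • T u) + (a • T w - c • T u)
      simp only [map_add, smul_add, add_smul]
      module
  lie_self := by
    rintro ⟨a, u⟩
    show (((0 : F), a • T u - a • T u) : F × V) = (0 : F × V)
    ext
    · simp
    · show a • T u - a • T u = (0 : V)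
      simp
  leibniz_lie := by
    rintro ⟨a, u⟩ ⟨b, v⟩ ⟨c, w⟩
    show (((0 : F), a • T (b • T w - c • T v) - (0 : F) • T u) : F × V)
      = (((0 : F), (0 : F) • T w - c • T (a • T v - b • T u)) : F × V)
        + (((0 : F), b • T (a • T w - c • T u) - (0 : F) • T v) : F × V)
    ext
    · simp
    · show a • T (b • T w - c • T v) - (0 : F) • T u
        = ((0 : F) • T w - c • T (a • T v - b • T u)) + (b • T (a • T w - c • T u) - (0 : F) • T v)
      simp only [map_sub, map_smul, zero_smul, smul_sub, smul_smul]
      module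

instance : LieAlgebra F (AA F V T) where
  lie_smul := by
    rintro r ⟨a, u⟩ ⟨b, v⟩
    show (((0 : F), a • T (r • v) - (r • b) • T u) : F × V)
      = r • (((0 : F), a • T v - b • T u) : F × V)
    ext
    · simp
    · show a • T (r • v) - (r • b) • T u = r • (a • T v - b • T u)
      simp only [map_smul, smul_sub, smul_smul, smul_eq_mul]
      module

/-- The distinguished element `e₀`. -/
def e0 (T : Module.End F V) : AA F V T := ((1, 0) : F × V)

/-- The inclusion of the Abelian ideal `V` into `F e₀ ⋉ V`. -/
def incl (T : Module.End F V) : V →ₗ[F] AA F V T where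
  toFun v := ((0, v) : F × V)
  map_add' u v := by
    show (((0 : F), u + v) : F × V) = (((0 : F), u) : F × V) + (((0 : F), v) : F × V)
    ext <;> simp
  map_smul' r v := by
    show (((0 : F), r • v) : F × V) = r • (((0 : F), v) : F × V)
    ext <;> simp

@[simp] lemma bracket_e0_incl (v : V) : ⁅e0 T, incl T v⁆ = incl T (T v) := by
  show (((0 : F), (1 : F) • T v - (0 : F) • T (0 : V)) : F × V) = (((0 : F), T v) : F × V)
  ext <;> simp

end AA


/-- A Lie algebra is indecomposable if it is not the direct sum of two nonzero ideals. -/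
def LieIndecomposable (F L : Type*) [Field F] [LieRing L] [LieAlgebra F L] : Prop :=
  ¬∃ (I J : LieIdeal F L), I ≠ ⊥ ∧ J ≠ ⊥ ∧ I ⊓ J = ⊥ ∧ I ⊔ J = ⊤

/-- The operator defining the Heisenberg algebra: `T (a, b) = (b, 0)`. -/
def heisT (F : Type*) [Field F] : Module.End F (F × F) :=
  (LinearMap.snd F F F).prod 0

/-- The Heisenberg Lie algebra `H_F`, with basis `e₀, e₁ = ((0,(1,0)))`, `e₂ = ((0,(0,1)))` and
relations `[e₀, e₂] = e₁`, `[e₀, e₁] = [e₁, e₂] = 0`. -/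
abbrev Heisenberg (F : Type*) [Field F] : Type _ := AA F (F × F) (heisT F)

/-! With `β v₀ = 1`, the identity `(β v) T v₀ = (β v₀) T v` says that `T = β(·) u` for `u = T v₀`,
and `[L,L] ⊆ ker β` gives `β u = 0`. In an indecomposable almost Abelian algebra `ker T ≤ range T`:
a vector of `ker T` outside `range T` spans a central ideal, complemented by the ideal `F e₀ ⊕ U`
for any complement `U ⊇ range T`. Here this reads `ker β = F u`, so `V = F u ⊕ F v₀` with
`T v₀ = u` and `T u = 0`, which is the Heisenberg algebra. -/

open LinearMap Submodule

theorem Submodule.isCompl_prod {R M M' : Type*} [Semiring R] [AddCommMonoid M] [Module R M]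
    [AddCommMonoid M'] [Module R M'] {p p' : Submodule R M} {q q' : Submodule R M'}
    (hp : IsCompl p p') (hq : IsCompl q q') : IsCompl (p.prod q) (p'.prod q') :=
  ⟨disjoint_iff.2 <| by rw [prod_inf_prod, hp.inf_eq_bot, hq.inf_eq_bot, prod_bot],
    codisjoint_iff.2 <| by rw [prod_sup_prod, hp.sup_eq_top, hq.sup_eq_top, prod_top]⟩

namespace AA

variable {T : Module.End F V}

def lieEquivOfConj {V' : Type*} [AddCommGroup V'] [Module F V'] {T' : Module.End F V'}
    (Φ : V' ≃ₗ[F] V) (hΦ : ∀ v, T (Φ v) = Φ (T' v)) : AA F V' T' ≃ₗ⁅F⁆ AA F V T :=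
  let E : AA F V' T' ≃ₗ[F] AA F V T := (LinearEquiv.refl F F).prodCongr Φ
  { E with
    map_lie' := fun {x y} => by
      show ((0 : F), Φ (x.1 • T' y.2 - y.1 • T' x.2))
        = ((0 : F), x.1 • T (Φ y.2) - y.1 • T (Φ x.2))
      simp [hΦ] }

theorem not_lieIndecomposable_of_isCompl {U W : Submodule F V} (hUW : IsCompl U W)
    (hW : W ≠ ⊥) (hTU : range T ≤ U) (hTW : W ≤ ker T) :
    ¬ LieIndecomposable F (AA F V T) := by
  let I : LieIdeal F (AA F V T) :=
    { (Submodule.prod ⊤ U : Submodule F (F × V)) with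
      lie_mem := fun {x m} _ =>
        ⟨trivial, hTU ⟨x.1 • m.2 - m.1 • x.2, by rw [map_sub, map_smul, map_smul]; rfl⟩⟩ }
  let J : LieIdeal F (AA F V T) :=
    { (Submodule.prod ⊥ W : Submodule F (F × V)) with
      lie_mem := fun {x m} hm => by
        obtain ⟨hm₁, hm₂⟩ : m.1 = 0 ∧ m.2 ∈ W := hm
        refine ⟨rfl, ?_⟩
        show x.1 • T m.2 - m.1 • T x.2 ∈ W
        simp [hm₁, mem_ker.1 (hTW hm₂)] }
  have hIJ : IsCompl I J :=
    LieSubmodule.isCompl_toSubmodule.1 (Submodule.isCompl_prod isCompl_top_bot hUW)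
  refine fun hind => hind ⟨I, J, ?_, ?_, hIJ.inf_eq_bot, hIJ.sup_eq_top⟩
  · rw [Ne, ← LieSubmodule.toSubmodule_eq_bot]
    show (Submodule.prod ⊤ U : Submodule F (F × V)) ≠ ⊥
    simp [prod_eq_bot_iff]
  · rw [Ne, ← LieSubmodule.toSubmodule_eq_bot]
    show (Submodule.prod ⊥ W : Submodule F (F × V)) ≠ ⊥
    simpa [prod_eq_bot_iff] using hW

theorem ker_le_range_of_lieIndecomposable (h : LieIndecomposable F (AA F V T)) :
    ker T ≤ range T := by
  intro w hw
  by_contra hwT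
  obtain ⟨U, hTU, hUW⟩ := (disjoint_span_singleton_of_notMem (K := F) hwT).exists_isCompl
  refine not_lieIndecomposable_of_isCompl hUW ?_ hTU ((span_singleton_le_iff_mem _ _).2 hw) h
  rw [Ne, span_singleton_eq_bot]
  rintro rfl
  exact hwT (zero_mem _)

end AA

section RankOne

variable {β : V →ₗ[F] F} {u v₀ : V}

theorem bijective_coprod_toSpanSingleton (hu : u ≠ 0) (hβu : β u = 0) (hv₀ : β v₀ = 1)
    (hker : ker β ≤ span F {u}) :
    Function.Bijective ((toSpanSingleton F V u).coprod (toSpanSingleton F V v₀)) := by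
  refine ⟨(injective_iff_map_eq_zero _).2 fun ⟨a, b⟩ hab => ?_, fun v => ?_⟩
  · simp only [coprod_apply, toSpanSingleton_apply] at hab
    have hb : b = 0 := by simpa [hβu, hv₀] using congrArg β hab
    subst hb
    simpa [hu] using hab
  · obtain ⟨a, ha⟩ := mem_span_singleton.1 (hker (show v - β v • v₀ ∈ ker β by simp [hv₀]))
    exact ⟨(a, β v), by simp [ha]⟩

theorem smulRight_coprod_toSpanSingleton (hβu : β u = 0) (hv₀ : β v₀ = 1) (p : F × F) :
    β.smulRight u ((toSpanSingleton F V u).coprod (toSpanSingleton F V v₀) p) =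
      (toSpanSingleton F V u).coprod (toSpanSingleton F V v₀) (heisT F p) := by
  simp [heisT, hβu, hv₀]

theorem AA.nonempty_lieEquiv_heisenberg (hu : u ≠ 0) (hβu : β u = 0) (hv₀ : β v₀ = 1)
    (hker : ker β ≤ span F {u}) : Nonempty (AA F V (β.smulRight u) ≃ₗ⁅F⁆ Heisenberg F) :=
  ⟨(AA.lieEquivOfConj (.ofBijective _ (bijective_coprod_toSpanSingleton hu hβu hv₀ hker))
    (smulRight_coprod_toSpanSingleton hβu hv₀)).symm⟩

end RankOne

/-- If `L = F e₀ ⋉ V` is indecomposable and there is a nonzero functional `β` on `V` with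
`[L,L] ⊆ ker β` and `(β v) [e₀,v'] = (β v') [e₀,v]` for all `v, v'`, then `L` is isomorphic to the
Heisenberg algebra. -/
theorem stmt16 (F V : Type*) [Field F] [AddCommGroup V] [Module F V]
    (T : Module.End F V) (hT : T ≠ 0) (hind : LieIndecomposable F (AA F V T))
    (β : V →ₗ[F] F) (hβ : β ≠ 0)
    (h₁ : ∀ v : V, β (T v) = 0)
    (h₂ : ∀ v v' : V, β v • T v' = β v' • T v) :
    Nonempty (AA F V T ≃ₗ⁅F⁆ Heisenberg F) := by
  obtain ⟨v₀, hv₀⟩ := LinearMap.surjective hβ 1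
  obtain ⟨u, rfl⟩ : ∃ u, T = β.smulRight u :=
    ⟨T v₀, LinearMap.ext fun v => by rw [smulRight_apply, h₂, hv₀, one_smul]⟩
  have hu : u ≠ 0 := by
    rintro rfl
    exact hT (by ext; simp)
  have hβu : β u = 0 := by simpa [hv₀] using h₁ v₀
  have hker : ker β ≤ span F {u} := fun w hw => by
    have hw' : w ∈ ker (β.smulRight u) := by simp [mem_ker.1 hw]
    simpa [range_smulRight_apply hβ] using AA.ker_le_range_of_lieIndecomposable hind hw'
  exact AA.nonempty_lieEquiv_heisenberg hu hβu hv₀ hker
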